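/- Let α, β > 0 and (v, θ, ω) ∈ ℝ³ with H₁(v,θ,ω)·H₂(v,θ,ω) < 0. Then v ≠ 0, ω ≠ 0, ω·H₁(v,θ,ω) < 0, and ω·H₂(v,θ,ω) > 0. -/
import Mathlib


noncomputable def H1 (α v θ ω : ℝ) : ℝ := 2 * α * θ + ω * |ω|

noncomputable def H2 (α β v θ ω : ℝ) : ℝ := ω * |ω| / (2 * α) + θ + ω * |v| / β

theorem stmt5 (α β v θ ω : ℝ) (hα : 0 < α) (hβ : 0 < β)
    (h : H1 α v θ ω * H2 α β v θ ω < 0) :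
    v ≠ 0 ∧ ω ≠ 0 ∧ ω * H1 α v θ ω < 0 ∧ ω * H2 α β v θ ω > 0 := by
  have hkey : H2 α β v θ ω = H1 α v θ ω / (2 * α) + ω * |v| / β := by
    have hα' : (2 * α) ≠ 0 := by positivity
    have h1 : H1 α v θ ω / (2 * α) = θ + ω * |ω| / (2 * α) := by
      unfold H1
      rw [add_div]
      congr 1
      field_simp
    unfold H2
    rw [h1]
    ring
  have hv : v ≠ 0 := by
    intro hv0
    rw [hkey, hv0] at h
    simp only [abs_zero, mul_zero, zero_div, add_zero] at h
    rw [← mul_div_assoc] at h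
    exact absurd h (not_lt.mpr (div_nonneg (mul_self_nonneg _) (by linarith)))
  have hω : ω ≠ 0 := by
    intro hω0
    unfold H1 H2 at h
    rw [hω0] at h
    simp at h
    nlinarith [sq_nonneg θ]
  have hω2 : 0 < ω ^ 2 := by positivity
  have hprod : ω * H1 α v θ ω * (ω * H2 α β v θ ω) < 0 := by nlinarith
  have hvabs : 0 < |v| := abs_pos.mpr hv
  have h1 : ω * H1 α v θ ω < 0 := by
    by_contra hc
    push_neg at hc
    have : 0 ≤ ω * H2 α β v θ ω := by
      rw [hkey]
      have : ω * (H1 α v θ ω / (2 * α) + ω * |v| / β)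
          = (ω * H1 α v θ ω) / (2 * α) + ω ^ 2 * |v| / β := by ring
      rw [this]
      positivity
    nlinarith
  have h2 : 0 < ω * H2 α β v θ ω := by
    rcases lt_trichotomy (ω * H2 α β v θ ω) 0 with hl | he | hg
    · nlinarith
    · nlinarith
    · exact hg
  exact ⟨hv, hω, h1, h2⟩
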